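/- For every k ≥ 0 there is a constant C (independent of k and n) such that sup_n ‖n^{k/2} p_k^n‖²_{L²([0,1]^k × ℝ^k)} ≤ C^k ‖ϱ_k‖²_{L²}, where p_k^n(t,x) = 2^{-k} p_k(⌈nt⌉, [x√n]) 1{⌈nt⌉ ∈ D_k^n} is the rescaled discrete random-walk density. -/

import Mathlib

open MeasureTheory

/-- The transition kernel of simple symmetric random walk on `ℤ` started at `0`. -/
noncomputable def rwKernel (i : ℕ) (x : ℤ) : ℝ :=
  ((Finset.univ.filter
      (fun s : Fin i → Bool => (∑ j : Fin i, if s j then (1 : ℤ) else -1) = x)).card : ℝ)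
    / 2 ^ i

/-- The closest integer to `x` having the same parity as `i`. -/
noncomputable def roundPar (i : ℤ) (x : ℝ) : ℤ :=
  2 * round ((x - ((i % 2 : ℤ) : ℝ)) / 2) + i % 2

/-- Previous value with the convention that index `-1` gives `0` (integers). -/
def prevZ {k : ℕ} (x : Fin k → ℤ) (j : Fin k) : ℤ :=
  if _h : 0 < (j : ℕ) then x ⟨(j : ℕ) - 1, lt_of_le_of_lt (Nat.sub_le _ _) j.isLt⟩ else 0

open Classical in
/-- The rescaled discrete random-walk density
`p_k^n(t,x) = 2^{-k} p_k(⌈nt⌉, [x√n]) 1{⌈nt⌉ ∈ D_k^n}`, with parity rounding of `x√n`. -/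
noncomputable def pkn (k n : ℕ) (p : (Fin k → ℝ) × (Fin k → ℝ)) : ℝ :=
  let I : Fin k → ℤ := fun j => ⌈(n : ℝ) * p.1 j⌉
  let X : Fin k → ℤ := fun j => roundPar (I j) (p.2 j * Real.sqrt n)
  if StrictMono I ∧ (∀ j : Fin k, 1 ≤ I j ∧ I j ≤ (n : ℤ)) then
    (1 / 2 ^ k) * ∏ j : Fin k, rwKernel (I j - prevZ I j).toNat (X j - prevZ X j)
  else 0

namespace PknAux

open Finset

/-! ### Combinatorics of the simple random walk kernel -/

/-- `q_d = C(2d,d)/4^d`, the return probability of the 2d-step walk. -/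
noncomputable def qq (d : ℕ) : ℝ := (Nat.centralBinom d : ℝ) / 4 ^ d

lemma qq_nonneg (d : ℕ) : 0 ≤ qq d := by
  unfold qq; positivity

lemma qq_zero : qq 0 = 1 := by simp [qq, Nat.centralBinom]

lemma qq_rec (d : ℕ) : ((d : ℝ) + 1) * qq (d + 1) = ((d : ℝ) + 1 / 2) * qq d := by
  have h := Nat.succ_mul_centralBinom_succ d
  have h' : ((d : ℝ) + 1) * (Nat.centralBinom (d + 1) : ℝ)
      = 2 * (2 * d + 1) * Nat.centralBinom d := by exact_mod_cast h
  unfold qq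
  rw [← mul_div_assoc, ← mul_div_assoc, div_eq_div_iff (by positivity) (by positivity)]
  linear_combination (4 : ℝ) ^ d * h'

/-- signed sum of a walk -/
def sgnSum {d : ℕ} (s : Fin d → Bool) : ℤ := ∑ j, if s j then (1 : ℤ) else -1

lemma sgnSum_eq {d : ℕ} (s : Fin d → Bool) :
    sgnSum s = 2 * ((univ.filter fun j => s j = true).card : ℤ) - d := by
  unfold sgnSum
  have : ∀ j : Fin d, (if s j then (1 : ℤ) else -1)
      = 2 * (if s j = true then (1 : ℤ) else 0) - 1 := by
    intro j; by_cases h : s j <;> simp [h]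
  rw [Finset.sum_congr rfl fun j _ => this j, Finset.sum_sub_distrib, ← Finset.mul_sum]
  simp [Finset.sum_boole]

lemma abs_sgnSum_le {d : ℕ} (s : Fin d → Bool) : |sgnSum s| ≤ (d : ℤ) := by
  unfold sgnSum
  calc |∑ j, if s j then (1 : ℤ) else -1| ≤ ∑ j : Fin d, |if s j then (1 : ℤ) else -1| :=
        Finset.abs_sum_le_sum_abs _ _
    _ = (d : ℤ) := by
        have h1 : ∀ j ∈ (univ : Finset (Fin d)), |if s j then (1 : ℤ) else -1| = 1 := by
          intro j _; by_cases h : s j <;> simp [h]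
        rw [Finset.sum_congr rfl h1, Finset.sum_const, Finset.card_univ, Fintype.card_fin]
        simp

/-- number of `d`-step walks ending at `z` -/
def Ndz (d : ℕ) (z : ℤ) : ℕ := (univ.filter fun s : Fin d → Bool => sgnSum s = z).card

lemma Ndz_eq_zero {d : ℕ} {z : ℤ} (h : (d : ℤ) < |z|) : Ndz d z = 0 := by
  unfold Ndz
  rw [Finset.card_eq_zero, Finset.filter_eq_empty_iff]
  intro s _ hs
  have := abs_sgnSum_le s
  rw [hs] at this
  omega

lemma rwKernel_eq (d : ℕ) (z : ℤ) : rwKernel d z = (Ndz d z : ℝ) / 2 ^ d := rfl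

lemma rwKernel_nonneg (d : ℕ) (z : ℤ) : 0 ≤ rwKernel d z := by
  rw [rwKernel_eq]; positivity

lemma abs_le_of_rwKernel_ne_zero {d : ℕ} {z : ℤ} (h : rwKernel d z ≠ 0) : |z| ≤ (d : ℤ) := by
  by_contra hc
  push_neg at hc
  rw [rwKernel_eq, Ndz_eq_zero hc] at h
  simp at h

/-- counting boolean functions with a prescribed number of `true`s -/
lemma count_true_card (α : Type*) [Fintype α] [DecidableEq α] (t : ℕ) :
    ((univ : Finset (α → Bool)).filter
        (fun u => (univ.filter (fun a => u a = true)).card = t)).card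
      = (Fintype.card α).choose t := by
  classical
  rw [← Finset.card_univ (α := α), ← Finset.card_powersetCard]
  refine Finset.card_nbij' (i := fun u => univ.filter (fun a => u a = true))
    (j := fun s => fun a => decide (a ∈ s)) ?_ ?_ ?_ ?_
  · intro u hu
    rw [Finset.mem_coe] at hu
    rw [Finset.mem_coe, Finset.mem_powersetCard]
    exact ⟨Finset.subset_univ _, (Finset.mem_filter.1 hu).2⟩
  · intro s hs
    rw [Finset.mem_coe, Finset.mem_filter]
    refine ⟨Finset.mem_univ _, ?_⟩
    rw [Finset.mem_coe, Finset.mem_powersetCard] at hs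
    rw [← hs.2]
    congr 1
    ext a
    simp
  · intro u _
    funext a
    simp
  · intro s _
    ext a
    simp

/-- the key Vandermonde-type counting identity -/
lemma sum_card_sq (d : ℕ) :
    ∑ z ∈ Finset.Icc (-(d : ℤ)) d, (Ndz d z) ^ 2 = Nat.centralBinom d := by
  classical
  -- Step 1: the sum of squares counts pairs of walks with equal endpoints.
  have h1 : ((univ : Finset ((Fin d → Bool) × (Fin d → Bool))).filter
        fun ss => sgnSum ss.1 = sgnSum ss.2).card
      = ∑ z ∈ Finset.Icc (-(d : ℤ)) d, (Ndz d z) ^ 2 := by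
    rw [Finset.card_eq_sum_card_fiberwise
      (f := fun ss : (Fin d → Bool) × (Fin d → Bool) => sgnSum ss.1)
      (t := Finset.Icc (-(d : ℤ)) d)
      (fun ss _ => by
        rw [Finset.mem_coe, Finset.mem_Icc, ← abs_le]
        exact abs_sgnSum_le ss.1)]
    refine Finset.sum_congr rfl fun z _ => ?_
    have : ((univ : Finset ((Fin d → Bool) × (Fin d → Bool))).filter
          fun ss => sgnSum ss.1 = sgnSum ss.2).filter (fun ss => sgnSum ss.1 = z)
        = (univ.filter fun s : Fin d → Bool => sgnSum s = z) ×ˢ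
          (univ.filter fun s : Fin d → Bool => sgnSum s = z) := by
      ext ⟨s1, s2⟩
      simp only [Finset.mem_filter, Finset.mem_product, Finset.mem_univ, true_and,
        Finset.filter_filter]
      constructor
      · rintro ⟨h12, h1z⟩
        exact ⟨h1z, h12 ▸ h1z⟩
      · rintro ⟨h1z, h2z⟩
        exact ⟨h1z.trans h2z.symm, h1z⟩
    rw [this, Finset.card_product, sq]
    rfl
  -- Step 2: pairs of walks with equal endpoints biject with balanced `2d`-walks.
  have h2 : ((univ : Finset ((Fin d → Bool) × (Fin d → Bool))).filter
        fun ss => sgnSum ss.1 = sgnSum ss.2).card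
      = ((univ : Finset (Fin d ⊕ Fin d → Bool)).filter
          fun u => (univ.filter (fun a => u a = true)).card = d).card := by
    have hcount : ∀ u : Fin d ⊕ Fin d → Bool,
        (univ.filter (fun a => u a = true)).card
          = (univ.filter (fun a => u (Sum.inl a) = true)).card
            + (univ.filter (fun a => u (Sum.inr a) = true)).card := by
      intro u
      have heqf : (univ : Finset (Fin d ⊕ Fin d)).filter (fun a => u a = true)
          = (univ.filter fun a => u (Sum.inl a) = true).disjSum
              (univ.filter fun a => u (Sum.inr a) = true) := by
        ext a
        cases a <;> simp
      rw [heqf, Finset.card_disjSum]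
    have hcard : ∀ s : Fin d → Bool,
        (univ.filter (fun a => (!s a) = true)).card
          = d - (univ.filter (fun a => s a = true)).card := by
      intro s
      have hsplit := Finset.card_filter_add_card_filter_not
        (s := (univ : Finset (Fin d))) (p := fun a => s a = true)
      have : (univ.filter (fun a => (!s a) = true)) = univ.filter (fun a => ¬(s a = true)) := by
        ext a; simp
      rw [this]
      have huniv : (univ : Finset (Fin d)).card = d := by simp
      omega
    refine Finset.card_nbij'
      (i := fun ss => Sum.elim ss.1 (fun j => ! ss.2 j))
      (j := fun u => (fun j => u (Sum.inl j), fun j => ! u (Sum.inr j))) ?_ ?_ ?_ ?_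
    · intro ⟨s1, s2⟩ hs
      rw [Finset.mem_coe, Finset.mem_filter] at hs ⊢
      refine ⟨Finset.mem_univ _, ?_⟩
      have heq : (univ.filter (fun a => s1 a = true)).card
          = (univ.filter (fun a => s2 a = true)).card := by
        have e1 := sgnSum_eq s1
        have e2 := sgnSum_eq s2
        have := hs.2
        simp only at this
        omega
      rw [hcount]
      simp only [Sum.elim_inl, Sum.elim_inr]
      show (univ.filter fun a => s1 a = true).card + (univ.filter fun a => (!s2 a) = true).card = d
      rw [hcard s2]
      have hle : (univ.filter (fun a => s2 a = true)).card ≤ d := by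
        calc (univ.filter (fun a => s2 a = true)).card ≤ (univ : Finset (Fin d)).card :=
              Finset.card_le_card (Finset.filter_subset _ _)
          _ = d := by simp
      omega
    · intro u hu
      rw [Finset.mem_coe, Finset.mem_filter] at hu ⊢
      refine ⟨Finset.mem_univ _, ?_⟩
      simp only
      rw [sgnSum_eq, sgnSum_eq]
      have := hu.2
      rw [hcount u] at this
      have h2' := hcard (fun j => ! u (Sum.inr j))
      simp only [Bool.not_not] at h2'
      have hle : (univ.filter (fun a => u (Sum.inr a) = true)).card ≤ d := by
        calc (univ.filter (fun a => u (Sum.inr a) = true)).card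
            ≤ (univ : Finset (Fin d)).card := Finset.card_le_card (Finset.filter_subset _ _)
          _ = d := by simp
      have h3' : (univ.filter (fun a => (fun j => ! u (Sum.inr j)) a = true)).card
          = d - (univ.filter (fun a => u (Sum.inr a) = true)).card := by
        have : (univ.filter (fun a => (fun j => ! u (Sum.inr j)) a = true))
            = univ.filter (fun a => ¬(u (Sum.inr a) = true)) := by
          ext a; simp
        rw [this]
        have hsplit := Finset.card_filter_add_card_filter_not
          (s := (univ : Finset (Fin d))) (p := fun a => u (Sum.inr a) = true)
        have huniv : (univ : Finset (Fin d)).card = d := by simp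
        omega
      rw [h3']
      push_cast [Nat.cast_sub hle]
      omega
    · intro ⟨s1, s2⟩ _
      simp only [Sum.elim_inl, Sum.elim_inr, Bool.not_not]
    · intro u _
      funext a
      cases a <;> simp
  rw [← h1, h2, count_true_card]
  simp [Nat.centralBinom, two_mul]

/-- the `L²` bound for the kernel: summing squares over any finite set is at most `q_d`. -/
lemma sum_rwKernel_sq_le (d : ℕ) (b : ℤ) (F : Finset ℤ) :
    ∑ y ∈ F, rwKernel d (y - b) ^ 2 ≤ qq d := by
  classical
  have hre : ∀ z : ℤ, rwKernel d z ^ 2 = ((Ndz d z : ℝ)) ^ 2 / 4 ^ d := by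
    intro z
    rw [rwKernel_eq, div_pow]
    congr 1
    rw [← pow_mul, mul_comm d 2, pow_mul]
    norm_num
  calc ∑ y ∈ F, rwKernel d (y - b) ^ 2
      = ∑ z ∈ F.image (· - b), ((Ndz d z : ℝ)) ^ 2 / 4 ^ d := by
        rw [Finset.sum_image (by intro x _ y _ h; simp only at h; omega)]
        exact Finset.sum_congr rfl fun y _ => hre (y - b)
    _ = ∑ z ∈ (F.image (· - b)) ∩ Finset.Icc (-(d : ℤ)) d,
          ((Ndz d z : ℝ)) ^ 2 / 4 ^ d := by
        refine (Finset.sum_subset Finset.inter_subset_left fun z hz hnz => ?_).symm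
        have : z ∉ Finset.Icc (-(d : ℤ)) d := fun hc =>
          hnz (Finset.mem_inter.2 ⟨hz, hc⟩)
        rw [Finset.mem_Icc, ← abs_le] at this
        push_neg at this
        rw [Ndz_eq_zero this]
        simp
    _ ≤ ∑ z ∈ Finset.Icc (-(d : ℤ)) d, ((Ndz d z : ℝ)) ^ 2 / 4 ^ d := by
        refine Finset.sum_le_sum_of_subset_of_nonneg Finset.inter_subset_right ?_
        intro z _ _
        positivity
    _ = qq d := by
        rw [← Finset.sum_div]
        unfold qq
        congr 1
        exact_mod_cast sum_card_sq d

/-! ### The convolution powers of `q` and the Gamma function -/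

/-- `k`-fold convolution power of `q` (coefficients of `(1-x)^{-k/2}`). -/
noncomputable def rr : ℕ → ℕ → ℝ
  | 0, m => if m = 0 then 1 else 0
  | (k + 1), m => ∑ d ∈ Finset.range (m + 1), qq d * rr k (m - d)

/-- generalized binomial coefficients `Γ(k/2+m)⋯/m!` -/
noncomputable def cc (k m : ℕ) : ℝ :=
  (∏ i ∈ Finset.range m, ((k : ℝ) / 2 + i)) / m.factorial

lemma cc_zero (k : ℕ) : cc k 0 = 1 := by simp [cc]

lemma cc_nonneg (k m : ℕ) : 0 ≤ cc k m := by
  unfold cc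
  have : 0 ≤ ∏ i ∈ Finset.range m, ((k : ℝ) / 2 + i) :=
    Finset.prod_nonneg fun i _ => by positivity
  positivity

lemma cc_rec (k m : ℕ) : cc k (m + 1) * ((m : ℝ) + 1) = ((k : ℝ) / 2 + m) * cc k m := by
  unfold cc
  rw [Finset.prod_range_succ, Nat.factorial_succ]
  have h1 : (m.factorial : ℝ) ≠ 0 := by positivity
  have h2 : ((m : ℝ) + 1) ≠ 0 := by positivity
  push_cast
  field_simp

lemma rr_nonneg (k m : ℕ) : 0 ≤ rr k m := by
  induction k generalizing m with
  | zero => unfold rr; split <;> norm_num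
  | succ k ih =>
      unfold rr
      exact Finset.sum_nonneg fun d _ => mul_nonneg (qq_nonneg d) (ih _)

lemma rr_eq_cc (k m : ℕ) : rr k m = cc k m := by
  induction k generalizing m with
  | zero =>
      unfold rr
      rcases Nat.eq_zero_or_pos m with hm | hm
      · subst hm; simp [cc_zero]
      · rw [if_neg (by omega)]
        unfold cc
        rw [Finset.prod_eq_zero (Finset.mem_range.2 hm) (by norm_num)]
        simp
  | succ k ih =>
      induction m with
      | zero =>
          unfold rr
          simp [ih 0, cc_zero, qq_zero]
      | succ m ihm =>
          -- the Chu–Vandermonde style recursion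
          have hL : ∀ M : ℕ, rr (k + 1) M = ∑ d ∈ Finset.range (M + 1), qq d * cc k (M - d) := by
            intro M
            unfold rr
            exact Finset.sum_congr rfl fun d _ => by rw [ih]
          have key : ((m : ℝ) + 1) * (∑ d ∈ Finset.range (m + 2), qq d * cc k (m + 1 - d))
              = (((k : ℝ) + 1) / 2 + m) * (∑ d ∈ Finset.range (m + 1), qq d * cc k (m - d)) := by
            have hsplit : ((m : ℝ) + 1) * (∑ d ∈ Finset.range (m + 2), qq d * cc k (m + 1 - d))
                = (∑ d ∈ Finset.range (m + 2), ((m + 1 - d : ℕ) : ℝ) * (qq d * cc k (m + 1 - d)))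
                  + ∑ d ∈ Finset.range (m + 2), (d : ℝ) * (qq d * cc k (m + 1 - d)) := by
              rw [Finset.mul_sum, ← Finset.sum_add_distrib]
              refine Finset.sum_congr rfl fun d hd => ?_
              rw [Finset.mem_range] at hd
              have : ((m + 1 - d : ℕ) : ℝ) + (d : ℝ) = (m : ℝ) + 1 := by
                have : (m + 1 - d : ℕ) + d = m + 1 := by omega
                exact_mod_cast congrArg (Nat.cast (R := ℝ)) this
              linear_combination (-(qq d * cc k (m + 1 - d))) * this
            have hS1 : (∑ d ∈ Finset.range (m + 2), ((m + 1 - d : ℕ) : ℝ) * (qq d * cc k (m + 1 - d)))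
                = ∑ d ∈ Finset.range (m + 1), ((k : ℝ) / 2 + ((m - d : ℕ) : ℝ)) * (qq d * cc k (m - d)) := by
              rw [Finset.sum_range_succ]
              simp only [Nat.sub_self, Nat.cast_zero, zero_mul, add_zero]
              refine Finset.sum_congr rfl fun d hd => ?_
              rw [Finset.mem_range] at hd
              have hd' : d ≤ m := by omega
              have e1 : m + 1 - d = (m - d) + 1 := by omega
              rw [e1]
              have e2 : ((m - d + 1 : ℕ) : ℝ) = ((m - d : ℕ) : ℝ) + 1 := by push_cast; ring
              rw [e2]
              linear_combination qq d * cc_rec k (m - d)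
            have hS2 : (∑ d ∈ Finset.range (m + 2), (d : ℝ) * (qq d * cc k (m + 1 - d)))
                = ∑ d ∈ Finset.range (m + 1), ((d : ℝ) + 1 / 2) * (qq d * cc k (m - d)) := by
              rw [Finset.sum_range_succ']
              simp only [Nat.cast_zero, zero_mul, add_zero]
              refine Finset.sum_congr rfl fun d hd => ?_
              have e1 : m + 1 - (d + 1) = m - d := by omega
              rw [e1]
              have e2 : ((d + 1 : ℕ) : ℝ) = (d : ℝ) + 1 := by push_cast; ring
              rw [e2]
              linear_combination cc k (m - d) * qq_rec d
            rw [hsplit, hS1, hS2, ← Finset.sum_add_distrib, Finset.mul_sum]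
            refine Finset.sum_congr rfl fun d hd => ?_
            rw [Finset.mem_range] at hd
            have hd' : d ≤ m := by omega
            have : ((m - d : ℕ) : ℝ) = (m : ℝ) - (d : ℝ) := by
              have : ((m - d : ℕ) : ℝ) + (d : ℝ) = (m : ℝ) := by
                have : (m - d) + d = m := by omega
                exact_mod_cast congrArg (Nat.cast (R := ℝ)) this
              linarith
            rw [this]
            push_cast
            ring
          rw [hL] at ihm ⊢
          have hc := cc_rec (k + 1) m
          have hm1 : ((m : ℝ) + 1) ≠ 0 := by positivity
          have hcast : (((k : ℕ) + 1 : ℕ) : ℝ) / 2 = ((k : ℝ) + 1) / 2 := by push_cast; ring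
          apply mul_left_cancel₀ hm1
          rw [key, ihm]
          rw [hcast] at hc
          linarith [hc]

lemma cc_step (k M : ℕ) : cc k (M + 1) * ((M : ℝ) + 1) = ((k : ℝ) / 2) * cc (k + 2) M := by
  unfold cc
  rw [Finset.prod_range_succ', Nat.factorial_succ]
  have h1 : (M.factorial : ℝ) ≠ 0 := by positivity
  have h2 : ((M : ℝ) + 1) ≠ 0 := by positivity
  have hc : ∀ i ∈ Finset.range M, ((k : ℝ) / 2 + ((i : ℝ) + 1)) = (((k + 2 : ℕ) : ℝ) / 2 + i) := by
    intro i _; push_cast; ring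
  rw [show (∏ i ∈ Finset.range M, ((k : ℝ) / 2 + ((i : ℕ) + 1 : ℕ)))
      = ∏ i ∈ Finset.range M, (((k + 2 : ℕ) : ℝ) / 2 + i) from
    Finset.prod_congr rfl fun i hi => by push_cast; ring]
  push_cast
  field_simp
  ring

lemma sum_cc (k M : ℕ) : ∑ m ∈ Finset.range (M + 1), cc k m = cc (k + 2) M := by
  induction M with
  | zero => simp [cc_zero]
  | succ M ih =>
      rw [Finset.sum_range_succ, ih]
      have h1 := cc_rec (k + 2) M
      have h2 := cc_step k M
      have hm1 : ((M : ℝ) + 1) ≠ 0 := by positivity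
      apply mul_right_cancel₀ hm1
      have hcast : (((k + 2 : ℕ)) : ℝ) / 2 = (k : ℝ) / 2 + 1 := by push_cast; ring
      rw [add_mul, h1, h2, hcast]
      ring

/-- cumulative sums of `rr` -/
noncomputable def rho (k M : ℕ) : ℝ := ∑ m ∈ Finset.range (M + 1), rr k m

lemma rho_nonneg (k M : ℕ) : 0 ≤ rho k M :=
  Finset.sum_nonneg fun m _ => rr_nonneg k m

lemma rho_zero (M : ℕ) : rho 0 M = 1 := by
  unfold rho
  rw [Finset.sum_eq_single 0]
  · rfl
  · intro m _ hm; unfold rr; rw [if_neg hm]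
  · intro h; exact absurd (Finset.mem_range.2 (by omega)) h

lemma rho_eq_cc (k M : ℕ) : rho k M = cc (k + 2) M := by
  unfold rho
  rw [Finset.sum_congr rfl fun m _ => rr_eq_cc k m, sum_cc]

lemma conv_rho (k M : ℕ) : ∑ d ∈ Finset.range (M + 1), qq d * rho k (M - d) = rho (k + 1) M := by
  induction M with
  | zero =>
      unfold rho
      simp [rr, qq_zero]
  | succ M ih =>
      have hrho : ∀ m : ℕ, rho k (m + 1) = rho k m + rr k (m + 1) := fun m =>
        Finset.sum_range_succ _ _
      have e1 : ∑ d ∈ Finset.range (M + 2), qq d * rho k (M + 1 - d)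
          = (∑ d ∈ Finset.range (M + 1), qq d * rho k (M + 1 - d)) + qq (M + 1) * rho k 0 := by
        rw [Finset.sum_range_succ]; simp
      have e2 : ∑ d ∈ Finset.range (M + 1), qq d * rho k (M + 1 - d)
          = (∑ d ∈ Finset.range (M + 1), qq d * rho k (M - d))
            + ∑ d ∈ Finset.range (M + 1), qq d * rr k (M + 1 - d) := by
        rw [← Finset.sum_add_distrib]
        refine Finset.sum_congr rfl fun d hd => ?_
        rw [Finset.mem_range] at hd
        have : M + 1 - d = (M - d) + 1 := by omega
        rw [this, hrho]
        ring
      have e3 : rho k 0 = rr k 0 := by unfold rho; simp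
      have e4 : rr (k + 1) (M + 1) = ∑ d ∈ Finset.range (M + 2), qq d * rr k (M + 1 - d) := rfl
      have e5 : rr (k + 1) (M + 1)
          = (∑ d ∈ Finset.range (M + 1), qq d * rr k (M + 1 - d)) + qq (M + 1) * rr k 0 := by
        rw [e4, Finset.sum_range_succ]
        simp
      have e6 : rho (k + 1) (M + 1) = rho (k + 1) M + rr (k + 1) (M + 1) :=
        Finset.sum_range_succ _ _
      rw [e1, e2, ih, e3, e6, e5]
      ring

/-- `Γ(x+N) = Γ(x)·∏(x+i)` -/
lemma Gamma_add_nat (x : ℝ) (hx : 0 < x) (N : ℕ) :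
    Real.Gamma (x + N) = Real.Gamma x * ∏ i ∈ Finset.range N, (x + i) := by
  induction N with
  | zero => simp
  | succ N ih =>
      have : x + (N + 1 : ℕ) = (x + N) + 1 := by push_cast; ring
      rw [this, Real.Gamma_add_one (by positivity), ih, Finset.prod_range_succ]
      ring

/-- log-convexity midpoint bound: `Γ(y+1/2) ≤ √(Γ(y)Γ(y+1))` -/
lemma Gamma_midpoint (y : ℝ) (hy : 0 < y) :
    Real.Gamma (y + 1 / 2) ≤ Real.sqrt (Real.Gamma y * Real.Gamma (y + 1)) := by
  have h := Real.convexOn_log_Gamma.2 (Set.mem_Ioi.2 hy)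
    (Set.mem_Ioi.2 (by linarith : (0 : ℝ) < y + 1)) (by norm_num : (0:ℝ) ≤ 1/2)
    (by norm_num : (0:ℝ) ≤ 1/2) (by norm_num)
  simp only [smul_eq_mul, Function.comp_apply] at h
  have harg : 1 / 2 * y + 1 / 2 * (y + 1) = y + 1 / 2 := by ring
  rw [harg] at h
  have hpos : 0 < Real.Gamma (y + 1 / 2) := Real.Gamma_pos_of_pos (by linarith)
  have hpy : 0 < Real.Gamma y := Real.Gamma_pos_of_pos hy
  have hpy1 : 0 < Real.Gamma (y + 1) := Real.Gamma_pos_of_pos (by linarith)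
  calc Real.Gamma (y + 1 / 2) = Real.exp (Real.log (Real.Gamma (y + 1 / 2))) :=
        (Real.exp_log hpos).symm
    _ ≤ Real.exp (1 / 2 * Real.log (Real.Gamma y) + 1 / 2 * Real.log (Real.Gamma (y + 1))) :=
        Real.exp_le_exp.2 h
    _ = Real.sqrt (Real.Gamma y * Real.Gamma (y + 1)) := by
        have f : ∀ a : ℝ, 0 < a → Real.exp (1 / 2 * Real.log a) = Real.sqrt a := by
          intro a ha
          rw [Real.sqrt_eq_rpow, Real.rpow_def_of_pos ha, mul_comm]
        rw [Real.exp_add, f _ hpy, f _ hpy1,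
          ← Real.sqrt_mul (le_of_lt hpy)]

/-- the Gamma ratio bound: for `k ≤ n`, `Γ(n+k/2+1) ≤ (√3√n)^k Γ(n+1)` -/
lemma Gamma_ratio (k n : ℕ) (hkn : k ≤ n) (hn : 1 ≤ n) :
    Real.Gamma ((n : ℝ) + (k : ℝ) / 2 + 1)
      ≤ (Real.sqrt 3 * Real.sqrt n) ^ k * Real.Gamma ((n : ℝ) + 1) := by
  have hn1 : (1 : ℝ) ≤ (n : ℝ) := by exact_mod_cast hn
  have hsq : (Real.sqrt 3 * Real.sqrt n) ^ 2 = 3 * n := by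
    rw [mul_pow, Real.sq_sqrt (by norm_num : (0:ℝ) ≤ 3), Real.sq_sqrt (by positivity)]
  have hΓn1 : 0 < Real.Gamma ((n : ℝ) + 1) := Real.Gamma_pos_of_pos (by positivity)
  rcases Nat.even_or_odd k with ⟨m, hm⟩ | ⟨m, hm⟩
  · -- k = 2m
    subst hm
    have hmn : m ≤ n := by omega
    have harg : (n : ℝ) + ((m + m : ℕ) : ℝ) / 2 + 1 = ((n : ℝ) + 1) + (m : ℕ) := by
      push_cast; ring
    rw [harg, Gamma_add_nat _ (by positivity) m]
    have hprod : ∏ i ∈ Finset.range m, ((n : ℝ) + 1 + i) ≤ (3 * n) ^ m := by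
      rw [show ((3 : ℝ) * n) ^ m = ∏ _i ∈ Finset.range m, (3 * (n:ℝ)) by
        rw [Finset.prod_const, Finset.card_range]]
      refine Finset.prod_le_prod (fun i _ => by positivity) fun i hi => ?_
      rw [Finset.mem_range] at hi
      have : (i : ℝ) + 1 ≤ (m : ℝ) := by exact_mod_cast Nat.succ_le_of_lt hi
      have hmn' : (m : ℝ) ≤ n := by exact_mod_cast hmn
      linarith
    have hpow : ((3 : ℝ) * n) ^ m = (Real.sqrt 3 * Real.sqrt n) ^ (m + m) := by
      rw [show m + m = 2 * m by ring, pow_mul, hsq]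
    calc Real.Gamma ((n:ℝ) + 1) * ∏ i ∈ Finset.range m, ((n : ℝ) + 1 + i)
        ≤ Real.Gamma ((n:ℝ) + 1) * (3 * n) ^ m :=
          mul_le_mul_of_nonneg_left hprod hΓn1.le
      _ = (Real.sqrt 3 * Real.sqrt n) ^ (m + m) * Real.Gamma ((n:ℝ) + 1) := by
          rw [hpow]; ring
  · -- k = 2m + 1
    subst hm
    have hmn : 2 * m + 1 ≤ n := by omega
    have harg : (n : ℝ) + ((2 * m + 1 : ℕ) : ℝ) / 2 + 1 = ((n : ℝ) + 3 / 2) + (m : ℕ) := by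
      push_cast; ring
    rw [harg, Gamma_add_nat _ (by positivity) m]
    have hmid : Real.Gamma ((n : ℝ) + 3 / 2)
        ≤ Real.Gamma ((n:ℝ) + 1) * Real.sqrt ((n : ℝ) + 1) := by
      have h1 := Gamma_midpoint ((n : ℝ) + 1) (by positivity)
      have harg2 : (n : ℝ) + 1 + 1 / 2 = (n : ℝ) + 3 / 2 := by ring
      rw [harg2] at h1
      have hΓ2 : Real.Gamma ((n : ℝ) + 1 + 1) = ((n : ℝ) + 1) * Real.Gamma ((n:ℝ) + 1) :=
        Real.Gamma_add_one (by positivity)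
      rw [hΓ2] at h1
      calc Real.Gamma ((n : ℝ) + 3 / 2)
          ≤ Real.sqrt (Real.Gamma ((n:ℝ)+1) * (((n:ℝ) + 1) * Real.Gamma ((n:ℝ)+1))) := h1
        _ = Real.Gamma ((n:ℝ) + 1) * Real.sqrt ((n : ℝ) + 1) := by
            rw [show Real.Gamma ((n:ℝ)+1) * (((n:ℝ) + 1) * Real.Gamma ((n:ℝ)+1))
                = (Real.Gamma ((n:ℝ)+1)) ^ 2 * ((n:ℝ) + 1) by ring]
            rw [Real.sqrt_mul (by positivity), Real.sqrt_sq hΓn1.le]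
    have hprod : ∏ i ∈ Finset.range m, ((n : ℝ) + 3 / 2 + i) ≤ (3 * n) ^ m := by
      rw [show ((3 : ℝ) * n) ^ m = ∏ _i ∈ Finset.range m, (3 * (n:ℝ)) by
        rw [Finset.prod_const, Finset.card_range]]
      refine Finset.prod_le_prod (fun i _ => by positivity) fun i hi => ?_
      rw [Finset.mem_range] at hi
      have h1 : (i : ℝ) + 1 ≤ (m : ℝ) := by exact_mod_cast Nat.succ_le_of_lt hi
      have h2 : 2 * (m : ℝ) + 1 ≤ (n : ℝ) := by exact_mod_cast hmn
      linarith
    have hsqrt : Real.sqrt ((n : ℝ) + 1) ≤ Real.sqrt 3 * Real.sqrt n := by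
      rw [← Real.sqrt_mul (by norm_num : (0:ℝ) ≤ 3)]
      exact Real.sqrt_le_sqrt (by linarith)
    have hpow : ((3 : ℝ) * n) ^ m = (Real.sqrt 3 * Real.sqrt n) ^ (2 * m) := by
      rw [pow_mul, hsq]
    have hprodnn : (0 : ℝ) ≤ ∏ i ∈ Finset.range m, ((n : ℝ) + 3 / 2 + i) :=
      Finset.prod_nonneg fun i _ => by positivity
    have hs3n : (0 : ℝ) ≤ Real.sqrt 3 * Real.sqrt n := by positivity
    calc Real.Gamma ((n:ℝ) + 3 / 2) * ∏ i ∈ Finset.range m, ((n : ℝ) + 3 / 2 + i)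
        ≤ (Real.Gamma ((n:ℝ) + 1) * Real.sqrt ((n:ℝ) + 1)) * (3 * n) ^ m := by
          refine mul_le_mul hmid hprod hprodnn ?_
          positivity
      _ ≤ (Real.Gamma ((n:ℝ) + 1) * (Real.sqrt 3 * Real.sqrt n)) * (3 * n) ^ m := by
          refine mul_le_mul_of_nonneg_right ?_ (by positivity)
          exact mul_le_mul_of_nonneg_left hsqrt hΓn1.le
      _ = (Real.sqrt 3 * Real.sqrt n) ^ (2 * m + 1) * Real.Gamma ((n:ℝ) + 1) := by
          rw [pow_succ, hpow]; ring

/-- the final discrete bound -/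
lemma rho_le (k n : ℕ) (hkn : k ≤ n) (hn : 1 ≤ n) :
    rho k n ≤ (Real.sqrt 3 * Real.sqrt n) ^ k / Real.Gamma ((k : ℝ) / 2 + 1) := by
  rw [rho_eq_cc]
  have hx : (0 : ℝ) < (k : ℝ) / 2 + 1 := by positivity
  have hΓk : 0 < Real.Gamma ((k : ℝ) / 2 + 1) := Real.Gamma_pos_of_pos hx
  have hΓn : 0 < Real.Gamma ((n : ℝ) + 1) := Real.Gamma_pos_of_pos (by positivity)
  have hcc : cc (k + 2) n = Real.Gamma ((n : ℝ) + (k : ℝ) / 2 + 1)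
      / (Real.Gamma ((k : ℝ) / 2 + 1) * Real.Gamma ((n : ℝ) + 1)) := by
    unfold cc
    have hprod := Gamma_add_nat ((k : ℝ) / 2 + 1) hx n
    have h1 : ∀ i ∈ Finset.range n, (((k + 2 : ℕ) : ℝ) / 2 + i) = ((k : ℝ) / 2 + 1 + i) := by
      intro i _; push_cast; ring
    rw [Finset.prod_congr rfl h1]
    have harg : (k : ℝ) / 2 + 1 + (n : ℕ) = (n : ℝ) + (k : ℝ) / 2 + 1 := by push_cast; ring
    rw [harg] at hprod
    rw [hprod]
    have hfact : (n.factorial : ℝ) = Real.Gamma ((n : ℝ) + 1) := by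
      rw [Real.Gamma_nat_eq_factorial]
    rw [hfact]
    field_simp
  rw [hcc]
  rw [div_le_div_iff₀ (by positivity) hΓk]
  have hratio := Gamma_ratio k n hkn hn
  have := mul_le_mul_of_nonneg_right hratio hΓk.le
  linear_combination this

/-! ### The chain sums over patterns -/

/-- previous value with general base `a` -/
def prevP {k : ℕ} (a : ℤ) (v : Fin k → ℤ) (j : Fin k) : ℤ :=
  if _h : 0 < (j : ℕ) then v ⟨(j : ℕ) - 1, lt_of_le_of_lt (Nat.sub_le _ _) j.isLt⟩ else a

lemma prevZ_eq_prevP {k : ℕ} (v : Fin k → ℤ) : prevZ v = prevP 0 v := rfl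

lemma prevP_zero {k : ℕ} (a : ℤ) (v : Fin (k + 1) → ℤ) : prevP a v 0 = a := by
  unfold prevP
  simp

lemma prevP_cons_succ {k : ℕ} (a c : ℤ) (v : Fin k → ℤ) (j : Fin k) :
    prevP a (Fin.cons c v) j.succ = prevP c v j := by
  unfold prevP
  rw [dif_pos (by simp : 0 < ((j.succ : Fin (k + 1)) : ℕ))]
  rcases Nat.eq_zero_or_pos (j : ℕ) with h0 | h0
  · rw [dif_neg (by omega)]
    have : (⟨((j.succ : Fin (k+1)) : ℕ) - 1,
        lt_of_le_of_lt (Nat.sub_le _ _) (j.succ).isLt⟩ : Fin (k + 1)) = 0 := by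
      apply Fin.ext
      simp [Fin.val_succ, h0]
    rw [this, Fin.cons_zero]
  · rw [dif_pos h0]
    have he : (⟨((j.succ : Fin (k+1)) : ℕ) - 1,
        lt_of_le_of_lt (Nat.sub_le _ _) (j.succ).isLt⟩ : Fin (k + 1))
        = Fin.succ ⟨(j : ℕ) - 1, lt_of_le_of_lt (Nat.sub_le _ _) j.isLt⟩ := by
      apply Fin.ext
      simp [Fin.val_succ]
      omega
    rw [he, Fin.cons_succ]

/-- the local chain product with start `(a, b)` and level constraint `n` -/
noncomputable def locP (n : ℕ) {k : ℕ} (a b : ℤ) (p : Fin k → ℤ × ℤ) : ℝ :=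
  ∏ j : Fin k,
    if prevP a (fun j' => (p j').1) j < (p j).1 ∧ (p j).1 ≤ (n : ℤ) then
      rwKernel ((p j).1 - prevP a (fun j' => (p j').1) j).toNat
        ((p j).2 - prevP b (fun j' => (p j').2) j) ^ 2
    else 0

lemma locP_nonneg (n : ℕ) {k : ℕ} (a b : ℤ) (p : Fin k → ℤ × ℤ) : 0 ≤ locP n a b p := by
  unfold locP
  refine Finset.prod_nonneg fun j _ => ?_
  split
  · positivity
  · exact le_rfl

/-- the admissible one-step patterns -/
noncomputable def QQ (n : ℕ) : Finset (ℤ × ℤ) :=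
  ((Finset.Icc 1 (n : ℤ)) ×ˢ (Finset.Icc (-(n : ℤ)) (n : ℤ))).filter
    (fun y => y.2 % 2 = y.1 % 2)

lemma cons_fst {k : ℕ} (y : ℤ × ℤ) (p : Fin k → ℤ × ℤ) :
    (fun j' => ((Fin.cons y p : Fin (k+1) → ℤ × ℤ) j').1) = Fin.cons y.1 (fun j' => (p j').1) := by
  funext j'
  refine Fin.cases ?_ ?_ j' <;> simp

lemma cons_snd {k : ℕ} (y : ℤ × ℤ) (p : Fin k → ℤ × ℤ) :
    (fun j' => ((Fin.cons y p : Fin (k+1) → ℤ × ℤ) j').2) = Fin.cons y.2 (fun j' => (p j').2) := by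
  funext j'
  refine Fin.cases ?_ ?_ j' <;> simp

lemma locP_cons (n : ℕ) {k : ℕ} (a b : ℤ) (y : ℤ × ℤ) (p : Fin k → ℤ × ℤ) :
    locP n a b (Fin.cons y p)
      = (if a < y.1 ∧ y.1 ≤ (n : ℤ) then rwKernel (y.1 - a).toNat (y.2 - b) ^ 2 else 0)
        * locP n y.1 y.2 p := by
  unfold locP
  rw [Fin.prod_univ_succ, cons_fst, cons_snd]
  simp only [prevP_zero, Fin.cons_zero, prevP_cons_succ, Fin.cons_succ]

lemma sum_piFinset_cons {α β : Type*} [DecidableEq α] [AddCommMonoid β] (S : Finset α)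
    (k : ℕ) (f : (Fin (k + 1) → α) → β) :
    ∑ p ∈ Fintype.piFinset (fun _ : Fin (k + 1) => S), f p
      = ∑ y ∈ S, ∑ p ∈ Fintype.piFinset (fun _ : Fin k => S), f (Fin.cons y p) := by
  rw [← Finset.sum_product']
  refine Finset.sum_nbij' (i := fun p => (p 0, Fin.tail p))
    (j := fun z => Fin.cons z.1 z.2) ?_ ?_ ?_ ?_ ?_
  · intro p hp
    rw [Fintype.mem_piFinset] at hp
    rw [Finset.mem_product]
    exact ⟨hp 0, by rw [Fintype.mem_piFinset]; intro j; exact hp j.succ⟩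
  · intro z hz
    rw [Finset.mem_product] at hz
    rw [Fintype.mem_piFinset]
    intro j
    refine Fin.cases ?_ ?_ j
    · simpa using hz.1
    · intro i
      simp only [Fin.cons_succ]
      exact Fintype.mem_piFinset.1 hz.2 i
  · intro p _
    exact Fin.cons_self_tail p
  · intro z _
    simp [Fin.tail_cons]
  · intro p _
    show f p = f (Fin.cons (p 0) (Fin.tail p))
    rw [Fin.cons_self_tail]

/-- The main chain bound. -/
lemma sum_locP_le (n : ℕ) (hn : 1 ≤ n) :
    ∀ (k : ℕ) (a b : ℤ), 0 ≤ a →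
      ∑ p ∈ Fintype.piFinset (fun _ : Fin k => QQ n), locP n a b p
        ≤ rho k ((n : ℤ) - a).toNat := by
  intro k
  induction k with
  | zero =>
      intro a b _
      rw [rho_zero]
      have h1 : ∀ p ∈ Fintype.piFinset (fun _ : Fin 0 => QQ n), locP n a b p = 1 := by
        intro p _
        unfold locP
        exact Finset.prod_of_isEmpty _
      rw [Finset.sum_congr rfl h1, Finset.sum_const, Fintype.card_piFinset]
      simp
  | succ k ih =>
      intro a b ha
      set M : ℕ := ((n : ℤ) - a).toNat with hM
      rw [sum_piFinset_cons]
      have step1 : ∀ y ∈ QQ n,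
          ∑ p ∈ Fintype.piFinset (fun _ : Fin k => QQ n), locP n a b (Fin.cons y p)
            ≤ (if a < y.1 ∧ y.1 ≤ (n : ℤ) then rwKernel (y.1 - a).toNat (y.2 - b) ^ 2 else 0)
              * rho k ((n : ℤ) - y.1).toNat := by
        intro y _
        rw [Finset.sum_congr rfl fun p _ => locP_cons n a b y p, ← Finset.mul_sum]
        by_cases hcond : a < y.1 ∧ y.1 ≤ (n : ℤ)
        · rw [if_pos hcond]
          refine mul_le_mul_of_nonneg_left ?_ (by positivity)
          exact ih y.1 y.2 (by omega)
        · rw [if_neg hcond]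
          simp
      calc ∑ y ∈ QQ n, ∑ p ∈ Fintype.piFinset (fun _ : Fin k => QQ n), locP n a b (Fin.cons y p)
          ≤ ∑ y ∈ QQ n,
              (if a < y.1 ∧ y.1 ≤ (n : ℤ) then rwKernel (y.1 - a).toNat (y.2 - b) ^ 2 else 0)
                * rho k ((n : ℤ) - y.1).toNat := Finset.sum_le_sum step1
        _ ≤ ∑ d ∈ Finset.range (M + 1), qq d * rho k (M - d) := ?_
        _ = rho (k + 1) M := conv_rho k M
      -- now the reindexing of the `y` sum
      unfold QQ
      rw [Finset.sum_filter, Finset.sum_product]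
      have inner : ∀ i ∈ Finset.Icc (1 : ℤ) (n : ℤ),
          (∑ m ∈ Finset.Icc (-(n : ℤ)) (n : ℤ),
            if (i, m).2 % 2 = (i, m).1 % 2 then
              (if a < (i, m).1 ∧ (i, m).1 ≤ (n : ℤ) then
                rwKernel ((i, m).1 - a).toNat ((i, m).2 - b) ^ 2 else 0)
                * rho k ((n : ℤ) - (i, m).1).toNat
            else 0)
          ≤ (if a < i ∧ i ≤ (n : ℤ) then
              qq (i - a).toNat * rho k ((n : ℤ) - i).toNat else 0) := by
        intro i _
        by_cases hcond : a < i ∧ i ≤ (n : ℤ)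
        · rw [if_pos hcond]
          calc (∑ m ∈ Finset.Icc (-(n : ℤ)) (n : ℤ),
              if m % 2 = i % 2 then
                (if a < i ∧ i ≤ (n : ℤ) then rwKernel (i - a).toNat (m - b) ^ 2 else 0)
                  * rho k ((n : ℤ) - i).toNat
              else 0)
              ≤ ∑ m ∈ Finset.Icc (-(n : ℤ)) (n : ℤ),
                  rwKernel (i - a).toNat (m - b) ^ 2 * rho k ((n : ℤ) - i).toNat := by
                refine Finset.sum_le_sum fun m _ => ?_
                rw [if_pos hcond]
                split
                · exact le_rfl
                · have h1 := rho_nonneg k ((n : ℤ) - i).toNat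
                  positivity
            _ = (∑ m ∈ Finset.Icc (-(n : ℤ)) (n : ℤ), rwKernel (i - a).toNat (m - b) ^ 2)
                * rho k ((n : ℤ) - i).toNat := by rw [Finset.sum_mul]
            _ ≤ qq (i - a).toNat * rho k ((n : ℤ) - i).toNat :=
                mul_le_mul_of_nonneg_right (sum_rwKernel_sq_le _ b _) (rho_nonneg _ _)
        · rw [if_neg hcond]
          refine le_of_eq (Finset.sum_eq_zero fun m _ => ?_)
          rw [if_neg hcond]
          simp
      calc (∑ i ∈ Finset.Icc (1 : ℤ) (n : ℤ), ∑ m ∈ Finset.Icc (-(n : ℤ)) (n : ℤ),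
            if (i, m).2 % 2 = (i, m).1 % 2 then
              (if a < (i, m).1 ∧ (i, m).1 ≤ (n : ℤ) then
                rwKernel ((i, m).1 - a).toNat ((i, m).2 - b) ^ 2 else 0)
                * rho k ((n : ℤ) - (i, m).1).toNat
            else 0)
          ≤ ∑ i ∈ Finset.Icc (1 : ℤ) (n : ℤ),
              (if a < i ∧ i ≤ (n : ℤ) then
                qq (i - a).toNat * rho k ((n : ℤ) - i).toNat else 0) :=
            Finset.sum_le_sum inner
        _ = ∑ i ∈ (Finset.Icc (1 : ℤ) (n : ℤ)).filter (fun i => a < i ∧ i ≤ (n : ℤ)),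
              qq (i - a).toNat * rho k ((n : ℤ) - i).toNat := by rw [Finset.sum_filter]
        _ = ∑ i ∈ (Finset.Icc (1 : ℤ) (n : ℤ)).filter (fun i => a < i ∧ i ≤ (n : ℤ)),
              qq (i - a).toNat * rho k (M - (i - a).toNat) := by
            refine Finset.sum_congr rfl fun i hi => ?_
            rw [Finset.mem_filter, Finset.mem_Icc] at hi
            have : ((n : ℤ) - i).toNat = M - (i - a).toNat := by omega
            rw [this]
        _ = ∑ d ∈ ((Finset.Icc (1 : ℤ) (n : ℤ)).filter
              (fun i => a < i ∧ i ≤ (n : ℤ))).image (fun i => (i - a).toNat),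
              qq d * rho k (M - d) := by
            refine (Finset.sum_image (g := fun i => (i - a).toNat)
              (f := fun d => qq d * rho k (M - d)) ?_).symm
            intro x hx y hy hxy
            rw [Finset.mem_coe, Finset.mem_filter, Finset.mem_Icc] at hx hy
            have hxy' : (x - a).toNat = (y - a).toNat := hxy
            omega
        _ ≤ ∑ d ∈ Finset.range (M + 1), qq d * rho k (M - d) := by
            refine Finset.sum_le_sum_of_subset_of_nonneg ?_ fun d _ _ =>
              mul_nonneg (qq_nonneg d) (rho_nonneg _ _)
            intro d hd
            rw [Finset.mem_image] at hd
            obtain ⟨i, hi, rfl⟩ := hd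
            rw [Finset.mem_filter, Finset.mem_Icc] at hi
            rw [Finset.mem_range]
            omega

/-! ### Discretization intervals -/

lemma ceil_eq_iff_mem (n : ℕ) (hn : 0 < n) (i : ℤ) (t : ℝ) :
    ⌈(n : ℝ) * t⌉ = i ↔ t ∈ Set.Ioc (((i : ℝ) - 1) / n) ((i : ℝ) / n) := by
  have hn' : (0 : ℝ) < n := by exact_mod_cast hn
  rw [Int.ceil_eq_iff, Set.mem_Ioc, div_lt_iff₀ hn', le_div_iff₀ hn', mul_comm t (n : ℝ)]

lemma roundPar_mod (i : ℤ) (z : ℝ) : roundPar i z % 2 = i % 2 := by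
  unfold roundPar
  omega

lemma roundPar_eq_iff (i m : ℤ) (h : m % 2 = i % 2) (z : ℝ) :
    roundPar i z = m ↔ ((m : ℝ) - 1 ≤ z ∧ z < (m : ℝ) + 1) := by
  obtain ⟨c, hc⟩ : ∃ c, m = 2 * c + i % 2 := ⟨(m - i % 2) / 2, by omega⟩
  unfold roundPar
  have h1 : (2 * round ((z - ((i % 2 : ℤ) : ℝ)) / 2) + i % 2 = m)
      ↔ round ((z - ((i % 2 : ℤ) : ℝ)) / 2) = c := by omega
  rw [h1, round_eq, Int.floor_eq_iff]
  have hm : (m : ℝ) = 2 * c + ((i % 2 : ℤ) : ℝ) := by exact_mod_cast hc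
  rw [hm]
  constructor
  · rintro ⟨ha, hb⟩
    push_cast at ha hb ⊢
    constructor <;> linarith
  · rintro ⟨ha, hb⟩
    push_cast at ha hb ⊢
    constructor <;> linarith

/-- the chain form of the admissibility condition -/
lemma cond_iff {k : ℕ} (n : ℕ) (v : Fin k → ℤ) :
    (StrictMono v ∧ ∀ j, 1 ≤ v j ∧ v j ≤ (n : ℤ))
      ↔ ∀ j, prevP 0 v j < v j ∧ v j ≤ (n : ℤ) := by
  constructor
  · rintro ⟨hsm, hb⟩ j
    refine ⟨?_, (hb j).2⟩
    unfold prevP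
    split
    · next h0 =>
        refine hsm ?_
        rw [Fin.lt_def]
        simp only
        omega
    · next h0 => exact lt_of_lt_of_le zero_lt_one (hb j).1
  · intro h
    have hpos : ∀ (jv : ℕ) (hj : jv < k), 1 ≤ v ⟨jv, hj⟩ := by
      intro jv
      induction jv with
      | zero =>
          intro hj
          have := (h ⟨0, hj⟩).1
          unfold prevP at this
          rw [dif_neg (by simp)] at this
          omega
      | succ jv ihv =>
          intro hj
          have hj' : jv < k := by omega
          have := (h ⟨jv + 1, hj⟩).1
          unfold prevP at this
          rw [dif_pos (by simp)] at this
          have he : (⟨jv + 1 - 1, lt_of_le_of_lt (Nat.sub_le _ _) hj⟩ : Fin k)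
              = ⟨jv, hj'⟩ := by apply Fin.ext; simp
          rw [he] at this
          have := ihv hj'
          omega
    refine ⟨?_, fun j => ⟨by have := hpos (j : ℕ) j.isLt; simpa using this, (h j).2⟩⟩
    cases k with
    | zero => exact fun a => absurd a.isLt (by omega)
    | succ k' =>
        rw [Fin.strictMono_iff_lt_succ]
        intro i
        have := (h i.succ).1
        unfold prevP at this
        rw [dif_pos (by simp)] at this
        have he : (⟨((i.succ : Fin (k' + 1)) : ℕ) - 1,
            lt_of_le_of_lt (Nat.sub_le _ _) (i.succ).isLt⟩ : Fin (k' + 1)) = i.castSucc := by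
          apply Fin.ext
          simp [Fin.val_succ]
        rw [he] at this
        exact this

/-! ### The discretization map and pointwise expansion -/

/-- the discretization map -/
noncomputable def psiM (n : ℕ) {k : ℕ} (p : (Fin k → ℝ) × (Fin k → ℝ)) : Fin k → ℤ × ℤ :=
  fun j => (⌈(n : ℝ) * p.1 j⌉, roundPar ⌈(n : ℝ) * p.1 j⌉ (p.2 j * Real.sqrt n))

lemma locP_ne_zero_mem (n : ℕ) {k : ℕ} (q : Fin k → ℤ × ℤ)
    (hpar : ∀ j, (q j).2 % 2 = (q j).1 % 2) (h : locP n 0 0 q ≠ 0) :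
    q ∈ Fintype.piFinset (fun _ : Fin k => QQ n) := by
  unfold locP at h
  rw [Finset.prod_ne_zero_iff] at h
  have hfac : ∀ j : Fin k,
      (prevP 0 (fun j' => (q j').1) j < (q j).1 ∧ (q j).1 ≤ (n : ℤ)) ∧
      |(q j).2 - prevP 0 (fun j' => (q j').2) j|
        ≤ (q j).1 - prevP 0 (fun j' => (q j').1) j := by
    intro j
    have hne := h j (Finset.mem_univ j)
    by_cases hc : prevP 0 (fun j' => (q j').1) j < (q j).1 ∧ (q j).1 ≤ (n : ℤ)
    · refine ⟨hc, ?_⟩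
      rw [if_pos hc] at hne
      have hk : rwKernel ((q j).1 - prevP 0 (fun j' => (q j').1) j).toNat
          ((q j).2 - prevP 0 (fun j' => (q j').2) j) ≠ 0 := by
        intro h0
        rw [h0] at hne
        exact hne (by norm_num)
      have habs := abs_le_of_rwKernel_ne_zero hk
      have ht : ((((q j).1 - prevP 0 (fun j' => (q j').1) j).toNat : ℕ) : ℤ)
          = (q j).1 - prevP 0 (fun j' => (q j').1) j := Int.toNat_of_nonneg (by omega)
      rwa [ht] at habs
    · rw [if_neg hc] at hne
      exact absurd rfl hne
  have key : ∀ (jv : ℕ) (hj : jv < k),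
      0 < (q ⟨jv, hj⟩).1 ∧ -(q ⟨jv, hj⟩).1 ≤ (q ⟨jv, hj⟩).2 ∧ (q ⟨jv, hj⟩).2 ≤ (q ⟨jv, hj⟩).1 := by
    intro jv
    induction jv with
    | zero =>
        intro hj
        have h1 := hfac ⟨0, hj⟩
        have hp1 : prevP 0 (fun j' => (q j').1) ⟨0, hj⟩ = 0 := by
          unfold prevP; rw [dif_neg (by simp)]
        have hp2 : prevP 0 (fun j' => (q j').2) ⟨0, hj⟩ = 0 := by
          unfold prevP; rw [dif_neg (by simp)]
        rw [hp1, hp2] at h1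
        obtain ⟨⟨hlt, _⟩, habs⟩ := h1
        rw [abs_le] at habs
        omega
    | succ jv ihv =>
        intro hj
        have hj' : jv < k := by omega
        have h1 := hfac ⟨jv + 1, hj⟩
        have hp1 : prevP 0 (fun j' => (q j').1) ⟨jv + 1, hj⟩ = (q ⟨jv, hj'⟩).1 := by
          unfold prevP
          rw [dif_pos (by simp)]
          simp
        have hp2 : prevP 0 (fun j' => (q j').2) ⟨jv + 1, hj⟩ = (q ⟨jv, hj'⟩).2 := by
          unfold prevP
          rw [dif_pos (by simp)]
          simp
        rw [hp1, hp2] at h1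
        obtain ⟨⟨hlt, _⟩, habs⟩ := h1
        rw [abs_le] at habs
        have := ihv hj'
        omega
  rw [Fintype.mem_piFinset]
  intro j
  unfold QQ
  rw [Finset.mem_filter, Finset.mem_product, Finset.mem_Icc, Finset.mem_Icc]
  have hk1 := key (j : ℕ) j.isLt
  rw [Fin.eta] at hk1
  have hb := (hfac j).1.2
  exact ⟨⟨⟨by omega, hb⟩, ⟨by omega, by omega⟩⟩, hpar j⟩

/-- the `if`-form of `locP` with base `(0,0)`. -/
lemma locP_eq_if (n : ℕ) {k : ℕ} (q : Fin k → ℤ × ℤ) :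
    locP n 0 0 q
      = if StrictMono (fun j => (q j).1) ∧ ∀ j, 1 ≤ (q j).1 ∧ (q j).1 ≤ (n : ℤ) then
          ∏ j, rwKernel ((q j).1 - prevP 0 (fun j' => (q j').1) j).toNat
            ((q j).2 - prevP 0 (fun j' => (q j').2) j) ^ 2
        else 0 := by
  by_cases h : StrictMono (fun j => (q j).1) ∧ ∀ j, 1 ≤ (q j).1 ∧ (q j).1 ≤ (n : ℤ)
  · rw [if_pos h]
    unfold locP
    refine Finset.prod_congr rfl fun j _ => ?_
    rw [if_pos (((cond_iff n (fun j' => (q j').1)).1 h) j)]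
  · rw [if_neg h]
    unfold locP
    have h' : ¬ ∀ j, prevP 0 (fun j' => (q j').1) j < (q j).1 ∧ (q j).1 ≤ (n : ℤ) :=
      fun hc => h ((cond_iff n (fun j' => (q j').1)).2 hc)
    obtain ⟨j, hj⟩ := not_forall.1 h'
    refine Finset.prod_eq_zero (Finset.mem_univ j) ?_
    rw [if_neg hj]

/-- time-box -/
def ASet (n : ℕ) {k : ℕ} (q : Fin k → ℤ × ℤ) : Set (Fin k → ℝ) :=
  Set.univ.pi fun j => Set.Ioc ((((q j).1 : ℝ) - 1) / n) (((q j).1 : ℝ) / n)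

/-- space-box -/
def BSet (n : ℕ) {k : ℕ} (q : Fin k → ℤ × ℤ) : Set (Fin k → ℝ) :=
  Set.univ.pi fun j =>
    Set.Ico ((((q j).2 : ℝ) - 1) / Real.sqrt n) ((((q j).2 : ℝ) + 1) / Real.sqrt n)

open Classical in
/-- pointwise expansion of the discretized chain product into box indicators -/
lemma pointwise_expand (n : ℕ) (hn : 1 ≤ n) {k : ℕ} (p : (Fin k → ℝ) × (Fin k → ℝ)) :
    locP n 0 0 (psiM n p)
      = ∑ q ∈ Fintype.piFinset (fun _ : Fin k => QQ n),
          Set.indicator ((ASet n q) ×ˢ (BSet n q)) (fun _ => locP n 0 0 q) p := by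
  have hn0 : 0 < n := hn
  have hs : (0 : ℝ) < Real.sqrt n := Real.sqrt_pos.2 (by exact_mod_cast hn0)
  have key : ∀ q ∈ Fintype.piFinset (fun _ : Fin k => QQ n),
      (p ∈ (ASet n q) ×ˢ (BSet n q) ↔ q = psiM n p) := by
    intro q hq
    rw [Set.mem_prod]
    constructor
    · rintro ⟨hA, hB⟩
      funext j
      have hA' := (Set.mem_univ_pi.1 hA) j
      have hceil : ⌈(n : ℝ) * p.1 j⌉ = (q j).1 := (ceil_eq_iff_mem n hn0 _ _).2 hA'
      have hq' := Fintype.mem_piFinset.1 hq j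
      unfold QQ at hq'
      rw [Finset.mem_filter] at hq'
      have hpar : (q j).2 % 2 = (q j).1 % 2 := hq'.2
      have hB' := (Set.mem_univ_pi.1 hB) j
      rw [Set.mem_Ico, div_le_iff₀ hs, lt_div_iff₀ hs] at hB'
      have hround : roundPar (q j).1 (p.2 j * Real.sqrt n) = (q j).2 :=
        (roundPar_eq_iff _ _ hpar _).2 hB'
      show q j = psiM n p j
      unfold psiM
      refine Prod.ext hceil.symm ?_
      simp only
      rw [hceil]
      exact hround.symm
    · rintro rfl
      constructor
      · unfold ASet
        rw [Set.mem_univ_pi]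
        intro j
        exact (ceil_eq_iff_mem n hn0 _ _).1 rfl
      · unfold BSet
        rw [Set.mem_univ_pi]
        intro j
        have hpar : (psiM n p j).2 % 2 = (psiM n p j).1 % 2 := roundPar_mod _ _
        have h1 : roundPar (psiM n p j).1 (p.2 j * Real.sqrt n) = (psiM n p j).2 := rfl
        have h2 := (roundPar_eq_iff _ _ hpar _).1 h1
        rw [Set.mem_Ico, div_le_iff₀ hs, lt_div_iff₀ hs]
        exact h2
  have hterm : ∀ q ∈ Fintype.piFinset (fun _ : Fin k => QQ n),
      Set.indicator ((ASet n q) ×ˢ (BSet n q)) (fun _ => locP n 0 0 q) p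
        = if q = psiM n p then locP n 0 0 q else 0 := by
    intro q hq
    rw [Set.indicator_apply]
    by_cases hmem : p ∈ (ASet n q) ×ˢ (BSet n q)
    · rw [if_pos hmem, if_pos ((key q hq).1 hmem)]
    · rw [if_neg hmem, if_neg (fun he => hmem ((key q hq).2 he))]
  rw [Finset.sum_congr rfl hterm, Finset.sum_ite_eq']
  by_cases hpsi : psiM n p ∈ Fintype.piFinset (fun _ : Fin k => QQ n)
  · rw [if_pos hpsi]
  · rw [if_neg hpsi]
    by_contra h0
    exact hpsi (locP_ne_zero_mem n _ (fun j => roundPar_mod _ _) h0)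

/-! ### The integral computation -/

lemma measurable_AB (n : ℕ) {k : ℕ} (q : Fin k → ℤ × ℤ) :
    MeasurableSet ((ASet n q) ×ˢ (BSet n q)) := by
  refine MeasurableSet.prod ?_ ?_
  · exact MeasurableSet.univ_pi fun j => measurableSet_Ioc
  · exact MeasurableSet.univ_pi fun j => measurableSet_Ico

lemma volume_AB (n : ℕ) (hn : 1 ≤ n) {k : ℕ} (q : Fin k → ℤ × ℤ) :
    volume ((ASet n q) ×ˢ (BSet n q))
      = ENNReal.ofReal (((1 : ℝ) / n) ^ k * (2 / Real.sqrt n) ^ k) := by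
  have hn' : (0 : ℝ) < n := by exact_mod_cast hn
  have hs : (0 : ℝ) < Real.sqrt n := Real.sqrt_pos.2 hn'
  rw [MeasureTheory.Measure.volume_eq_prod, Measure.prod_prod]
  unfold ASet BSet
  rw [volume_pi_pi, volume_pi_pi]
  have h1 : ∀ j : Fin k, volume (Set.Ioc ((((q j).1 : ℝ) - 1) / n) (((q j).1 : ℝ) / n))
      = ENNReal.ofReal ((1 : ℝ) / n) := by
    intro j
    rw [Real.volume_Ioc, div_sub_div_same,
      show ((q j).1 : ℝ) - (((q j).1 : ℝ) - 1) = 1 by ring]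
  have h2 : ∀ j : Fin k, volume (Set.Ico ((((q j).2 : ℝ) - 1) / Real.sqrt n)
      ((((q j).2 : ℝ) + 1) / Real.sqrt n)) = ENNReal.ofReal (2 / Real.sqrt n) := by
    intro j
    rw [Real.volume_Ico, div_sub_div_same,
      show ((q j).2 : ℝ) + 1 - (((q j).2 : ℝ) - 1) = 2 by ring]
  rw [Finset.prod_congr rfl fun j _ => h1 j, Finset.prod_congr rfl fun j _ => h2 j,
    Finset.prod_const, Finset.prod_const, Finset.card_univ, Fintype.card_fin,
    ← ENNReal.ofReal_pow (by positivity), ← ENNReal.ofReal_pow (by positivity),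
    ← ENNReal.ofReal_mul (by positivity)]

lemma integral_locP (n : ℕ) (hn : 1 ≤ n) (k : ℕ) :
    ∫ p : (Fin k → ℝ) × (Fin k → ℝ), locP n 0 0 (psiM n p)
      = ((1 : ℝ) / n) ^ k * (2 / Real.sqrt n) ^ k
        * ∑ q ∈ Fintype.piFinset (fun _ : Fin k => QQ n), locP n 0 0 q := by
  classical
  have heq : (fun p : (Fin k → ℝ) × (Fin k → ℝ) => locP n 0 0 (psiM n p))
      = fun p => ∑ q ∈ Fintype.piFinset (fun _ : Fin k => QQ n),
          Set.indicator ((ASet n q) ×ˢ (BSet n q)) (fun _ => locP n 0 0 q) p :=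
    funext fun p => pointwise_expand n hn p
  rw [heq]
  have hint : ∀ q ∈ Fintype.piFinset (fun _ : Fin k => QQ n),
      Integrable (Set.indicator ((ASet n q) ×ˢ (BSet n q)) (fun _ => locP n 0 0 q))
        (volume : Measure ((Fin k → ℝ) × (Fin k → ℝ))) := by
    intro q _
    rw [integrable_indicator_iff (measurable_AB n q)]
    refine integrableOn_const ?_
    rw [volume_AB n hn q]
    exact ENNReal.ofReal_lt_top.ne
  rw [integral_finset_sum _ hint]
  have hterm : ∀ q ∈ Fintype.piFinset (fun _ : Fin k => QQ n),
      (∫ p : (Fin k → ℝ) × (Fin k → ℝ),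
          Set.indicator ((ASet n q) ×ˢ (BSet n q)) (fun _ => locP n 0 0 q) p)
        = (((1 : ℝ) / n) ^ k * (2 / Real.sqrt n) ^ k) * locP n 0 0 q := by
    intro q _
    rw [integral_indicator_const _ (measurable_AB n q), measureReal_def, volume_AB n hn q,
      ENNReal.toReal_ofReal (by positivity), smul_eq_mul]
  rw [Finset.sum_congr rfl hterm, ← Finset.mul_sum]

/-! ### Identification of the integrand -/

lemma sq_rpow (n k : ℕ) (hn : 1 ≤ n) : ((n : ℝ) ^ ((k : ℝ) / 2)) ^ 2 = (n : ℝ) ^ k := by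
  have h0 : (0 : ℝ) ≤ n := by positivity
  rw [← Real.rpow_natCast ((n : ℝ) ^ ((k : ℝ) / 2)) 2, ← Real.rpow_mul h0]
  rw [show (k : ℝ) / 2 * ((2 : ℕ) : ℝ) = (k : ℝ) by push_cast; ring]
  exact Real.rpow_natCast _ k

lemma pkn_sq (n k : ℕ) (hn : 1 ≤ n) (p : (Fin k → ℝ) × (Fin k → ℝ)) :
    ((n : ℝ) ^ ((k : ℝ) / 2) * pkn k n p) ^ 2
      = ((n : ℝ) ^ k / 4 ^ k) * locP n 0 0 (psiM n p) := by
  classical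
  have hpkn : pkn k n p
      = if StrictMono (fun j => (psiM n p j).1)
            ∧ ∀ j, 1 ≤ (psiM n p j).1 ∧ (psiM n p j).1 ≤ (n : ℤ) then
          (1 / 2 ^ k) * ∏ j, rwKernel
            ((psiM n p j).1 - prevP 0 (fun j' => (psiM n p j').1) j).toNat
            ((psiM n p j).2 - prevP 0 (fun j' => (psiM n p j').2) j)
        else 0 := by
    simp only [pkn, psiM, prevZ_eq_prevP]
    exact if_congr Iff.rfl rfl rfl
  rw [mul_pow, sq_rpow n k hn, hpkn, locP_eq_if]
  have h4 : ((1 : ℝ) / 2 ^ k) ^ 2 = 1 / 4 ^ k := by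
    rw [div_pow, one_pow, ← pow_mul, mul_comm k 2, pow_mul]
    norm_num
  by_cases h : StrictMono (fun j => (psiM n p j).1)
      ∧ ∀ j, 1 ≤ (psiM n p j).1 ∧ (psiM n p j).1 ≤ (n : ℤ)
  · rw [if_pos h, if_pos h, mul_pow, h4, ← Finset.prod_pow]
    ring
  · rw [if_neg h, if_neg h]
    ring

/-- strictly monotone integer chains in `[1,n]` force `k ≤ n` -/
lemma chain_length_le (n k : ℕ) (v : Fin k → ℤ) (hsm : StrictMono v)
    (hb : ∀ j, 1 ≤ v j ∧ v j ≤ (n : ℤ)) : k ≤ n := by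
  rcases Nat.eq_zero_or_pos k with hk | hk
  · omega
  have hgrow : ∀ (jv : ℕ) (hj : jv < k), v ⟨0, hk⟩ + jv ≤ v ⟨jv, hj⟩ := by
    intro jv
    induction jv with
    | zero => intro hj; simp
    | succ jv ihv =>
        intro hj
        have hj' : jv < k := by omega
        have h1 := ihv hj'
        have h2 : v ⟨jv, hj'⟩ < v ⟨jv + 1, hj⟩ := hsm (by rw [Fin.lt_def]; simp)
        push_cast
        push_cast at h1
        omega
  have h1 := hgrow (k - 1) (by omega)
  have h2 := (hb ⟨k - 1, by omega⟩).2
  have h3 := (hb ⟨0, hk⟩).1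
  have h4 : ((k : ℤ) - 1 : ℤ) = ((k - 1 : ℕ) : ℤ) := by omega
  omega

end PknAux

open PknAux in
/-- Uniform-in-`n` `L²` bound for the rescaled discrete density:
`sup_n ‖n^{k/2} p_k^n‖²_{L²} ≤ C^k ‖ϱ_k‖²_{L²} = C^k / (2^k Γ(k/2+1))`. -/
theorem pkn_L2_uniform_bound :
    ∃ C > (0 : ℝ), ∀ k n : ℕ, 1 ≤ n →
      (∫ p : (Fin k → ℝ) × (Fin k → ℝ), ((n : ℝ) ^ ((k : ℝ) / 2) * pkn k n p) ^ 2) ≤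
        C ^ k * (1 / (2 ^ k * Real.Gamma ((k : ℝ) / 2 + 1))) := by
  classical
  refine ⟨2, by norm_num, ?_⟩
  intro k n hn
  have hΓ : 0 < Real.Gamma ((k : ℝ) / 2 + 1) := Real.Gamma_pos_of_pos (by positivity)
  have hRHS : (2 : ℝ) ^ k * (1 / (2 ^ k * Real.Gamma ((k : ℝ) / 2 + 1)))
      = 1 / Real.Gamma ((k : ℝ) / 2 + 1) := by
    have : (2 : ℝ) ^ k ≠ 0 := by positivity
    field_simp
  have hn' : (0 : ℝ) < n := by exact_mod_cast hn
  have hs : (0 : ℝ) < Real.sqrt n := Real.sqrt_pos.2 hn'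
  by_cases hkn : k ≤ n
  · -- main case
    have heq : (fun p : (Fin k → ℝ) × (Fin k → ℝ) => ((n : ℝ) ^ ((k : ℝ) / 2) * pkn k n p) ^ 2)
        = fun p => ((n : ℝ) ^ k / 4 ^ k) * locP n 0 0 (psiM n p) :=
      funext fun p => pkn_sq n k hn p
    rw [heq, integral_const_mul, integral_locP n hn k]
    have hsum : ∑ q ∈ Fintype.piFinset (fun _ : Fin k => QQ n), locP n 0 0 q ≤ rho k n := by
      have := sum_locP_le n hn k 0 0 le_rfl
      simpa using this
    have hrho := rho_le k n hkn hn
    have hC : (0 : ℝ) ≤ (n : ℝ) ^ k / 4 ^ k * (((1 : ℝ) / n) ^ k * (2 / Real.sqrt n) ^ k) := by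
      positivity
    calc (n : ℝ) ^ k / 4 ^ k * (((1 : ℝ) / n) ^ k * (2 / Real.sqrt n) ^ k
            * ∑ q ∈ Fintype.piFinset (fun _ : Fin k => QQ n), locP n 0 0 q)
        ≤ (n : ℝ) ^ k / 4 ^ k * (((1 : ℝ) / n) ^ k * (2 / Real.sqrt n) ^ k
            * ((Real.sqrt 3 * Real.sqrt n) ^ k / Real.Gamma ((k : ℝ) / 2 + 1))) := by
          gcongr
          exact hsum.trans hrho
      _ = ((n : ℝ) / 4) ^ k * ((1 / (n : ℝ)) * (2 / Real.sqrt n) * (Real.sqrt 3 * Real.sqrt n)) ^ k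
              * (1 / Real.Gamma ((k : ℝ) / 2 + 1)) := by
          rw [mul_pow, mul_pow, div_pow]
          simp only [div_pow, mul_pow, one_div, inv_pow]
          ring
      _ = ((n : ℝ) / 4 * ((2 * Real.sqrt 3) / n)) ^ k * (1 / Real.Gamma ((k : ℝ) / 2 + 1)) := by
          have e1 : (1 / (n : ℝ)) * (2 / Real.sqrt n) * (Real.sqrt 3 * Real.sqrt n)
              = (2 * Real.sqrt 3) / n := by
            field_simp
          rw [e1, ← mul_pow]
      _ = (Real.sqrt 3 / 2) ^ k * (1 / Real.Gamma ((k : ℝ) / 2 + 1)) := by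
          have e2 : ((n : ℝ) / 4) * ((2 * Real.sqrt 3) / n) = Real.sqrt 3 / 2 := by
            field_simp
            ring
          rw [e2]
      _ ≤ 1 * (1 / Real.Gamma ((k : ℝ) / 2 + 1)) := by
          refine mul_le_mul_of_nonneg_right ?_ (by positivity)
          refine pow_le_one₀ (by positivity) ?_
          have h3 : Real.sqrt 3 ≤ 2 := by
            nlinarith [Real.sq_sqrt (show (0 : ℝ) ≤ 3 by norm_num), Real.sqrt_nonneg 3]
          linarith
      _ = 2 ^ k * (1 / (2 ^ k * Real.Gamma ((k : ℝ) / 2 + 1))) := by rw [one_mul, hRHS]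
  · -- degenerate case `n < k`: the density vanishes identically
    have hzero : ∀ p : (Fin k → ℝ) × (Fin k → ℝ), pkn k n p = 0 := by
      intro p
      unfold pkn
      rw [if_neg]
      rintro ⟨hsm, hb⟩
      exact hkn (chain_length_le n k _ hsm hb)
    have : (fun p : (Fin k → ℝ) × (Fin k → ℝ) =>
        ((n : ℝ) ^ ((k : ℝ) / 2) * pkn k n p) ^ 2) = fun _ => 0 := by
      funext p
      rw [hzero p]
      ring
    rw [this, integral_zero, hRHS]
    positivity
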